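/- arXiv:2108.09612 — 2 statements merged into one kernel-verified Lean document; each statement's English description precedes it below -/
import Mathlib

section
/- If P is a (K1, F1, Z1, S1) CPDA for a multiaccess combination network with H relays, r relays per user, and u users per r-subset (K1 = u·C(H,r)), and A is a (K2, F2, Z2, S2) PDA, then the product array L (defined entrywise by L_{(j1,j2),(k1,k2)} = a_{j2,k2} + (p_{j1,k1}-1)·S2 if both entries are integers, * otherwise) is a (u·K2·C(H,r), F1·F2, Z1·F2 + (F1-Z1)·Z2, S1·S2) CPDA, where column ((T,i),k2) of L is connected to relay set T. Moreover, for every integer s ∈ [S1·S2], the relay intersection set I_s for L equals the relay intersection set I_{s1} for P, where s1 = (s - <s>_{S2})/S2 + 1. -/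
open scoped Classical

/-- A `(K, F, Z, S)` placement delivery array (stars encoded as `none`). -/
def IsPDA {ι κ : Type*} [Fintype ι] [Fintype κ] (Z S : ℕ) (P : ι → κ → Option ℕ) : Prop :=
  (∀ j k s, P j k = some s → 1 ≤ s ∧ s ≤ S) ∧
  (∀ k, (Finset.univ.filter (fun j => P j k = none)).card = Z) ∧
  (∀ s, 1 ≤ s → s ≤ S → ∃ j k, P j k = some s) ∧
  (∀ j₁ k₁ j₂ k₂ s, P j₁ k₁ = some s → P j₂ k₂ = some s → (j₁, k₁) ≠ (j₂, k₂) →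
    j₁ ≠ j₂ ∧ k₁ ≠ k₂ ∧ P j₁ k₂ = none ∧ P j₂ k₁ = none)

/-- `I_s`: the intersection of the relay sets `lab k` over all columns `k` in whose
column the integer `s` appears. -/
def Iset {ι κ : Type*} [Fintype ι] [Fintype κ] {H : ℕ} (P : ι → κ → Option ℕ)
    (lab : κ → Finset (Fin H)) (s : ℕ) : Finset (Fin H) :=
  Finset.univ.filter (fun h => ∀ j k, P j k = some s → h ∈ lab k)

/-- A combinatorial PDA: a PDA whose columns carry relay sets `lab k`, such that for every
integer `s ∈ [S]` the intersection `I_s` is nonempty. -/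
def IsCPDA {ι κ : Type*} [Fintype ι] [Fintype κ] {H : ℕ} (Z S : ℕ)
    (P : ι → κ → Option ℕ) (lab : κ → Finset (Fin H)) : Prop :=
  IsPDA Z S P ∧ ∀ s, 1 ≤ s → s ≤ S → (Iset P lab s).Nonempty

/-- The product array. -/
def prodPDA {ι₁ κ₁ ι₂ κ₂ : Type*} (S₂ : ℕ)
    (P : ι₁ → κ₁ → Option ℕ) (A : ι₂ → κ₂ → Option ℕ) :
    ι₁ × ι₂ → κ₁ × κ₂ → Option ℕ :=
  fun j k =>
    match P j.1 k.1, A j.2 k.2 with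
    | some s₁, some s₂ => some (s₂ + (s₁ - 1) * S₂)
    | _, _ => none

/-- `<s>_q`: `s mod q` if this is nonzero, and `q` otherwise. -/
def modRep (s q : ℕ) : ℕ := if s % q ≠ 0 then s % q else q

/-! Every `s ∈ [S₁·S₂]` is uniquely `s₂ + (s₁ - 1)·S₂` with `s₁ ∈ [S₁]`, `s₂ ∈ [S₂]`, and
`(s - <s>_{S₂})/S₂ + 1` recovers `s₁`. A non-star entry of `L` is a pair of non-star entries of
`P` and `A`, so each PDA axiom of `L` reduces to that of `P` or of `A`. Since every `s₂` occurs
somewhere in `A`, `s` occurs in some column `(k₁, _)` of `L` exactly when `s₁` occurs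
in column `k₁` of `P`, so `I_s` of `L` is `I_{s₁}` of `P`. -/

section Encoding

variable {S₂ s₂ : ℕ}

lemma modRep_add_mul (h₁ : 1 ≤ s₂) (h₂ : s₂ ≤ S₂) (c : ℕ) : modRep (s₂ + c * S₂) S₂ = s₂ := by
  unfold modRep
  rw [Nat.add_mul_mod_self_right]
  rcases h₂.lt_or_eq with h | rfl
  · rw [Nat.mod_eq_of_lt h, if_pos (by omega)]
  · simp

lemma add_mul_sub_modRep_div (h₁ : 1 ≤ s₂) (h₂ : s₂ ≤ S₂) (c : ℕ) :
    (s₂ + c * S₂ - modRep (s₂ + c * S₂) S₂) / S₂ = c := by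
  rw [modRep_add_mul h₁ h₂, Nat.add_sub_cancel_left, Nat.mul_div_cancel _ (by omega)]

lemma add_mul_sub_one_inj {a₁ a₂ b₁ b₂ : ℕ} (ha₁ : 1 ≤ a₁) (hb₁ : 1 ≤ b₁)
    (ha₂ : 1 ≤ a₂) (ha₂' : a₂ ≤ S₂) (hb₂ : 1 ≤ b₂) (hb₂' : b₂ ≤ S₂)
    (h : a₂ + (a₁ - 1) * S₂ = b₂ + (b₁ - 1) * S₂) : a₁ = b₁ ∧ a₂ = b₂ := by
  have hq := add_mul_sub_modRep_div ha₂ ha₂' (a₁ - 1)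
  rw [h, add_mul_sub_modRep_div hb₂ hb₂'] at hq
  refine ⟨by omega, ?_⟩
  rw [← modRep_add_mul ha₂ ha₂' (a₁ - 1), h, modRep_add_mul hb₂ hb₂']

lemma exists_eq_add_mul_sub_one {S₁ s : ℕ} (h₁ : 1 ≤ s) (h₂ : s ≤ S₁ * S₂) :
    ∃ s₁ s₂, 1 ≤ s₁ ∧ s₁ ≤ S₁ ∧ 1 ≤ s₂ ∧ s₂ ≤ S₂ ∧ s = s₂ + (s₁ - 1) * S₂ := by
  have hS₂ : 0 < S₂ := Nat.pos_of_ne_zero fun h => by simp [h] at h₂; omega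
  have hdiv : (s - 1) / S₂ < S₁ := Nat.div_lt_of_lt_mul (by rw [Nat.mul_comm]; omega)
  have hmod : (s - 1) % S₂ < S₂ := Nat.mod_lt _ hS₂
  refine ⟨(s - 1) / S₂ + 1, (s - 1) % S₂ + 1, Nat.le_add_left _ _, hdiv,
    Nat.le_add_left _ _, hmod, ?_⟩
  rw [Nat.add_one_sub_one]
  have := Nat.mod_add_div' (s - 1) S₂
  omega

end Encoding

section Product

variable {ι₁ κ₁ ι₂ κ₂ : Type*} {S₂ : ℕ} {P : ι₁ → κ₁ → Option ℕ} {A : ι₂ → κ₂ → Option ℕ}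

lemma prodPDA_eq_some_iff {j : ι₁ × ι₂} {k : κ₁ × κ₂} {s : ℕ} :
    prodPDA S₂ P A j k = some s ↔
      ∃ s₁ s₂, P j.1 k.1 = some s₁ ∧ A j.2 k.2 = some s₂ ∧ s = s₂ + (s₁ - 1) * S₂ := by
  unfold prodPDA
  cases P j.1 k.1 <;> cases A j.2 k.2 <;> simp [eq_comm]

lemma prodPDA_eq_none_iff {j : ι₁ × ι₂} {k : κ₁ × κ₂} :
    prodPDA S₂ P A j k = none ↔ P j.1 k.1 = none ∨ A j.2 k.2 = none := by
  unfold prodPDA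
  cases P j.1 k.1 <;> cases A j.2 k.2 <;> simp

variable [Fintype ι₁] [Fintype κ₁] [Fintype ι₂] [Fintype κ₂] {Z₁ S₁ Z₂ : ℕ}

lemma card_filter_prodPDA_eq_none (hP : IsPDA Z₁ S₁ P) (hA : IsPDA Z₂ S₂ A) (k : κ₁ × κ₂) :
    (Finset.univ.filter fun j => prodPDA S₂ P A j k = none).card
      = Z₁ * Fintype.card ι₂ + (Fintype.card ι₁ - Z₁) * Z₂ := by
  set N₁ := Finset.univ.filter fun j₁ => P j₁ k.1 = none
  set N₂ := Finset.univ.filter fun j₂ => A j₂ k.2 = none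
  have hsplit : (Finset.univ.filter fun j => prodPDA S₂ P A j k = none)
      = N₁ ×ˢ Finset.univ ∪ N₁ᶜ ×ˢ N₂ := by
    ext ⟨j₁, j₂⟩
    simp only [Finset.mem_filter, Finset.mem_univ, true_and, Finset.mem_union,
      Finset.mem_product, Finset.mem_compl, prodPDA_eq_none_iff, N₁, N₂]
    tauto
  have hdisj : Disjoint (N₁ ×ˢ (Finset.univ : Finset ι₂)) (N₁ᶜ ×ˢ N₂) :=
    Finset.disjoint_product.2 (Or.inl disjoint_compl_right)
  rw [hsplit, Finset.card_union_of_disjoint hdisj, Finset.card_product, Finset.card_product,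
    Finset.card_compl, hP.2.1 k.1, hA.2.1 k.2, Finset.card_univ]

lemma prodPDA_bounds (hP : IsPDA Z₁ S₁ P) (hA : IsPDA Z₂ S₂ A) {j : ι₁ × ι₂} {k : κ₁ × κ₂}
    {s : ℕ} (hs : prodPDA S₂ P A j k = some s) : 1 ≤ s ∧ s ≤ S₁ * S₂ := by
  obtain ⟨s₁, s₂, h₁, h₂, rfl⟩ := prodPDA_eq_some_iff.1 hs
  obtain ⟨hs₁, hs₁'⟩ := hP.1 _ _ _ h₁
  obtain ⟨hs₂, hs₂'⟩ := hA.1 _ _ _ h₂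
  have : (s₁ - 1) * S₂ + S₂ ≤ S₁ * S₂ := by
    rw [← Nat.succ_mul]; exact Nat.mul_le_mul_right _ (by omega)
  omega

lemma exists_prodPDA_eq_some (hP : IsPDA Z₁ S₁ P) (hA : IsPDA Z₂ S₂ A) {s : ℕ}
    (h₁ : 1 ≤ s) (h₂ : s ≤ S₁ * S₂) : ∃ j k, prodPDA S₂ P A j k = some s := by
  obtain ⟨s₁, s₂, hs₁, hs₁', hs₂, hs₂', rfl⟩ := exists_eq_add_mul_sub_one h₁ h₂
  obtain ⟨j₁, k₁, hP₁⟩ := hP.2.2.1 s₁ hs₁ hs₁'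
  obtain ⟨j₂, k₂, hA₂⟩ := hA.2.2.1 s₂ hs₂ hs₂'
  exact ⟨(j₁, j₂), (k₁, k₂), prodPDA_eq_some_iff.2 ⟨s₁, s₂, hP₁, hA₂, rfl⟩⟩

lemma prodPDA_eq_some_factors (hP : IsPDA Z₁ S₁ P) (hA : IsPDA Z₂ S₂ A) {s₁ s₂ : ℕ}
    (hs₁ : 1 ≤ s₁) (hs₂ : 1 ≤ s₂) (hs₂' : s₂ ≤ S₂) {j : ι₁ × ι₂} {k : κ₁ × κ₂}
    (h : prodPDA S₂ P A j k = some (s₂ + (s₁ - 1) * S₂)) :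
    P j.1 k.1 = some s₁ ∧ A j.2 k.2 = some s₂ := by
  obtain ⟨t₁, t₂, hP₁, hA₂, ht⟩ := prodPDA_eq_some_iff.1 h
  obtain ⟨rfl, rfl⟩ := add_mul_sub_one_inj hs₁ (hP.1 _ _ _ hP₁).1 hs₂ hs₂'
    (hA.1 _ _ _ hA₂).1 (hA.1 _ _ _ hA₂).2 ht
  exact ⟨hP₁, hA₂⟩

lemma prodPDA_distinct (hP : IsPDA Z₁ S₁ P) (hA : IsPDA Z₂ S₂ A) {j j' : ι₁ × ι₂}
    {k k' : κ₁ × κ₂} {s : ℕ} (hs : prodPDA S₂ P A j k = some s)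
    (hs' : prodPDA S₂ P A j' k' = some s) (hne : (j, k) ≠ (j', k')) :
    j ≠ j' ∧ k ≠ k' ∧ prodPDA S₂ P A j k' = none ∧ prodPDA S₂ P A j' k = none := by
  obtain ⟨s₁, s₂, hP₁, hA₂, rfl⟩ := prodPDA_eq_some_iff.1 hs
  obtain ⟨hP₁', hA₂'⟩ := prodPDA_eq_some_factors hP hA (hP.1 _ _ _ hP₁).1
    (hA.1 _ _ _ hA₂).1 (hA.1 _ _ _ hA₂).2 hs'
  by_cases hsame : (j.1, k.1) = (j'.1, k'.1)
  · have hne₂ : (j.2, k.2) ≠ (j'.2, k'.2) := fun h => hne (by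
      simp only [Prod.mk.injEq] at hsame h ⊢
      exact ⟨Prod.ext hsame.1 h.1, Prod.ext hsame.2 h.2⟩)
    obtain ⟨hj, hk, h₁, h₂⟩ := hA.2.2.2 _ _ _ _ _ hA₂ hA₂' hne₂
    exact ⟨ne_of_apply_ne Prod.snd hj, ne_of_apply_ne Prod.snd hk,
      prodPDA_eq_none_iff.2 (Or.inr h₁), prodPDA_eq_none_iff.2 (Or.inr h₂)⟩
  · obtain ⟨hj, hk, h₁, h₂⟩ := hP.2.2.2 _ _ _ _ _ hP₁ hP₁' hsame
    exact ⟨ne_of_apply_ne Prod.fst hj, ne_of_apply_ne Prod.fst hk,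
      prodPDA_eq_none_iff.2 (Or.inl h₁), prodPDA_eq_none_iff.2 (Or.inl h₂)⟩

theorem IsPDA.prodPDA (hP : IsPDA Z₁ S₁ P) (hA : IsPDA Z₂ S₂ A) :
    IsPDA (Z₁ * Fintype.card ι₂ + (Fintype.card ι₁ - Z₁) * Z₂) (S₁ * S₂) (prodPDA S₂ P A) :=
  ⟨fun _ _ _ => prodPDA_bounds hP hA, card_filter_prodPDA_eq_none hP hA,
    fun _ => exists_prodPDA_eq_some hP hA,
    fun _ _ _ _ _ => prodPDA_distinct hP hA⟩

variable {H : ℕ} (lab : κ₁ → Finset (Fin H))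

lemma Iset_prodPDA_add_mul (hP : IsPDA Z₁ S₁ P) (hA : IsPDA Z₂ S₂ A) {s₁ s₂ : ℕ}
    (hs₁ : 1 ≤ s₁) (hs₂ : 1 ≤ s₂) (hs₂' : s₂ ≤ S₂) :
    Iset (prodPDA S₂ P A) (fun k => lab k.1) (s₂ + (s₁ - 1) * S₂) = Iset P lab s₁ := by
  obtain ⟨j₂, k₂, hA₂⟩ := hA.2.2.1 s₂ hs₂ hs₂'
  ext h
  simp only [Iset, Finset.mem_filter, Finset.mem_univ, true_and]
  constructor
  · intro hL j₁ k₁ hP₁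
    exact hL (j₁, j₂) (k₁, k₂) (prodPDA_eq_some_iff.2 ⟨s₁, s₂, hP₁, hA₂, rfl⟩)
  · intro hP' j k hL
    exact hP' j.1 k.1 (prodPDA_eq_some_factors hP hA hs₁ hs₂ hs₂' hL).1

lemma Iset_prodPDA (hP : IsPDA Z₁ S₁ P) (hA : IsPDA Z₂ S₂ A) {s : ℕ}
    (h₁ : 1 ≤ s) (h₂ : s ≤ S₁ * S₂) :
    1 ≤ (s - modRep s S₂) / S₂ + 1 ∧ (s - modRep s S₂) / S₂ + 1 ≤ S₁ ∧
      Iset (prodPDA S₂ P A) (fun k => lab k.1) s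
        = Iset P lab ((s - modRep s S₂) / S₂ + 1) := by
  obtain ⟨s₁, s₂, hs₁, hs₁', hs₂, hs₂', rfl⟩ := exists_eq_add_mul_sub_one h₁ h₂
  rw [add_mul_sub_modRep_div hs₂ hs₂', Nat.sub_add_cancel hs₁]
  exact ⟨hs₁, hs₁', Iset_prodPDA_add_mul lab hP hA hs₁ hs₂ hs₂'⟩

theorem IsCPDA.prodPDA (hP : IsCPDA Z₁ S₁ P lab) (hA : IsPDA Z₂ S₂ A) :
    IsCPDA (Z₁ * Fintype.card ι₂ + (Fintype.card ι₁ - Z₁) * Z₂) (S₁ * S₂) (prodPDA S₂ P A)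
      (fun k => lab k.1) := by
  refine ⟨hP.1.prodPDA hA, fun s h₁ h₂ => ?_⟩
  obtain ⟨hlo, hhi, hI⟩ := Iset_prodPDA lab hP.1 hA h₁ h₂
  rw [hI]
  exact hP.2 _ hlo hhi

end Product

theorem stmt6_general {H r u F₁ F₂ K₂ Z₁ S₁ Z₂ S₂ : ℕ}
    (P : Fin F₁ → ({T : Finset (Fin H) // T.card = r} × Fin u) → Option ℕ)
    (A : Fin F₂ → Fin K₂ → Option ℕ)
    (hP : IsCPDA Z₁ S₁ P (fun k => k.1.1)) (hA : IsPDA Z₂ S₂ A) :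
    Fintype.card (({T : Finset (Fin H) // T.card = r} × Fin u) × Fin K₂)
        = u * K₂ * Nat.choose H r
    ∧ IsCPDA (Z₁ * F₂ + (F₁ - Z₁) * Z₂) (S₁ * S₂) (prodPDA S₂ P A)
        (fun k => k.1.1.1)
    ∧ ∀ s, 1 ≤ s → s ≤ S₁ * S₂ →
        Iset (prodPDA S₂ P A) (fun k => k.1.1.1) s
          = Iset P (fun k => k.1.1) ((s - modRep s S₂) / S₂ + 1) := by
  refine ⟨?_, ?_, fun s h₁ h₂ => (Iset_prodPDA (fun k => k.1.1) hP.1 hA h₁ h₂).2.2⟩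
  · simp only [Fintype.card_prod, Fintype.card_finset_len, Fintype.card_fin]
    ring
  · simpa only [Fintype.card_fin] using
      IsCPDA.prodPDA (fun k : {T : Finset (Fin H) // T.card = r} × Fin u => k.1.1) hP hA

/-- If `P` is a `(u·C(H,r), F1, Z1, S1)` CPDA (columns labeled `(T,i)` with `T` an
`r`-subset of `[H]`, `i ∈ [u]`, and relay set `T`) and `A` is a `(K2,F2,Z2,S2)` PDA,
then the product array `L` is a `(u·K2·C(H,r), F1·F2, Z1·F2+(F1-Z1)·Z2, S1·S2)` CPDA,
where column `((T,i),k2)` gets relay set `T`; moreover for every `s ∈ [S1·S2]`,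
`I_s` of `L` equals `I_{s1}` of `P` with `s1 = (s - <s>_{S2})/S2 + 1`. -/
theorem stmt6 {H r u F₁ F₂ K₂ Z₁ S₁ Z₂ S₂ : ℕ} (hr : 0 < r) (hrH : r < H) (hu : 0 < u)
    (P : Fin F₁ → ({T : Finset (Fin H) // T.card = r} × Fin u) → Option ℕ)
    (A : Fin F₂ → Fin K₂ → Option ℕ)
    (hP : IsCPDA Z₁ S₁ P (fun k => k.1.1)) (hA : IsPDA Z₂ S₂ A) :
    Fintype.card (({T : Finset (Fin H) // T.card = r} × Fin u) × Fin K₂)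
        = u * K₂ * Nat.choose H r
    ∧ IsCPDA (Z₁ * F₂ + (F₁ - Z₁) * Z₂) (S₁ * S₂) (prodPDA S₂ P A)
        (fun k => k.1.1.1)
    ∧ ∀ s, 1 ≤ s → s ≤ S₁ * S₂ →
        Iset (prodPDA S₂ P A) (fun k => k.1.1.1) s
          = Iset P (fun k => k.1.1) ((s - modRep s S₂) / S₂ + 1) :=
  stmt6_general P A hP hA
end

section
/- In Construction 1 with λ = 1 and ω = 1, the number of stars remaining in each column after deleting useless stars is Z - Z' where F1 = C(H,a), the useless-star count is Z' = C(H-r, a-1), the non-star count per column is C(H-r, a) + (r-1)·C(H-r, a-2), and hence the induced scheme has memory ratio M/N = 1 - (C(H-r,a) + (r-1)·C(H-r,a-2))/(C(H,a) - C(H-r,a-1)) and subpacketization F = C(H,a) - C(H-r,a-1). -/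
open scoped Classical

/-- Binomial coefficient with integer arguments, following the convention that
`C(n,k) = 0` whenever `k < 0` or `k > n`. -/
def zchoose (n k : ℤ) : ℕ := if 0 ≤ k ∧ k ≤ n then n.toNat.choose k.toNat else 0

/-- Hamming weight of a binary vector of length `H`. -/
def wt {H : ℕ} (f : Fin H → Bool) : ℕ :=
  (Finset.univ.filter (fun i => f i = true)).card

/-- Hamming distance `d(f|_T, b)` between the restrictions to `T` of `f` and `b`. -/
def distOn {H : ℕ} (T : Finset (Fin H)) (f b : Fin H → Bool) : ℕ :=
  (T.filter (fun i => f i ≠ b i)).card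

/-- The agreement set `C = {i ∈ T : f_i = b_i}`. -/
def agreeSet {H : ℕ} (T : Finset (Fin H)) (f b : Fin H → Bool) : Finset (Fin H) :=
  T.filter (fun i => f i = b i)

/-- The vector `e` agreeing with `b` on `T` and with `f` off `T`. -/
def mixVec {H : ℕ} (T : Finset (Fin H)) (f b : Fin H → Bool) : Fin H → Bool :=
  fun i => if i ∈ T then b i else f i

/-!
A weight-`a` row `f` is determined by its restriction to `T` together with its support off `T`,
an arbitrary subset of the `H - r` positions outside `T`; once `f|_T` is fixed with `k` ones there
are `C(H-r, a-k)` such rows. Since `b|_T` has a single zero `t₀`, the rows at distance `r` from `b`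
on `T` are those with `f|_T = ¬b|_T = 𝟙_{t₀}`, giving `C(H-r, a-1)`. The rows at distance `r-1`
agree with `b` at exactly one `c ∈ T`: for `c = t₀` the restriction `f|_T` vanishes, giving
`C(H-r, a)`, and for each of the `r-1` other `c` it has ones exactly at `c` and `t₀`, giving
`C(H-r, a-2)`. The memory ratio is then plain algebra, the denominator being positive because
`C(H-r, a-1) ≤ C(H-1, a-1) < C(H, a)`.
-/

open Finset

lemma zchoose_natCast (n k : ℕ) : zchoose n k = n.choose k := by
  unfold zchoose
  split_ifs with h
  · simp
  · rw [Nat.choose_eq_zero_of_lt (by omega)]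

lemma zchoose_of_neg (n : ℤ) {k : ℤ} (hk : k < 0) : zchoose n k = 0 := by
  simp [zchoose, hk.not_ge]

section Counting

variable {α : Type*} [Fintype α] [DecidableEq α]

lemma card_filter_eq_card_add_card_compl (T : Finset α) (p : α → Prop) [DecidablePred p] :
    #{i | p i} = #(T.filter p) + #(Tᶜ.filter p) := by
  rw [← card_union_of_disjoint (disjoint_filter_filter disjoint_compl_right), ← filter_union,
    union_compl]

lemma card_support_eq_of_eqOn {T : Finset α} {f g : α → Bool} (hfg : ∀ i ∈ T, f i = g i) :
    #{i | f i = true} = #{i ∈ T | g i = true} + #{i ∈ Tᶜ | f i = true} := by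
  rw [card_filter_eq_card_add_card_compl T, filter_congr fun i hi => by rw [hfg i hi]]

lemma card_support_eq_eqOn_of_le (T : Finset α) (g : α → Bool) {a : ℕ}
    (ha : #{i ∈ T | g i = true} ≤ a) :
    #{f : α → Bool | #{i | f i = true} = a ∧ ∀ i ∈ T, f i = g i}
      = (Fintype.card α - #T).choose (a - #{i ∈ T | g i = true}) := by
  rw [← card_compl, ← card_powersetCard]
  refine card_nbij' (fun f => {i ∈ Tᶜ | f i = true})
    (fun S i => if i ∈ T then g i else decide (i ∈ S)) ?_ ?_ ?_ ?_
  · intro f hf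
    simp only [mem_coe, mem_filter, mem_univ, true_and, mem_powersetCard] at hf ⊢
    obtain ⟨hwt, hfg⟩ := hf
    refine ⟨filter_subset _ _, ?_⟩
    rw [card_support_eq_of_eqOn hfg] at hwt
    omega
  · intro S hS
    simp only [mem_coe, mem_powersetCard] at hS
    have hS' : {i ∈ Tᶜ | (if i ∈ T then g i else decide (i ∈ S)) = true} = S := by
      ext i
      constructor
      · intro hi
        simp only [mem_filter, mem_compl] at hi
        simpa [hi.1] using hi.2
      · intro hi
        have := hS.1 hi
        simp_all
    simp only [mem_coe, mem_filter, mem_univ, true_and]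
    refine ⟨?_, fun i hi => if_pos hi⟩
    rw [card_support_eq_of_eqOn (g := g) (fun i hi => if_pos hi), hS', hS.2]
    omega
  · intro f hf
    simp only [mem_coe, mem_filter, mem_univ, true_and] at hf
    have hfg := hf.2
    funext i
    by_cases hi : i ∈ T <;> simp [hi, hfg]
  · intro S hS
    simp only [mem_coe, mem_powersetCard] at hS
    ext i
    have := @hS.1 i
    by_cases hi : i ∈ T <;> simp_all

lemma card_support_eq_eqOn_of_lt (T : Finset α) (g : α → Bool) {a : ℕ}
    (ha : a < #{i ∈ T | g i = true}) :
    #{f : α → Bool | #{i | f i = true} = a ∧ ∀ i ∈ T, f i = g i} = 0 := by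
  rw [card_eq_zero, filter_eq_empty_iff]
  rintro f - ⟨hwt, hfg⟩
  rw [card_support_eq_of_eqOn hfg] at hwt
  omega

lemma card_support_eq_eqOn (T : Finset α) (g : α → Bool) (a : ℕ) :
    #{f : α → Bool | #{i | f i = true} = a ∧ ∀ i ∈ T, f i = g i}
      = zchoose (Fintype.card α - #T) (a - #{i ∈ T | g i = true}) := by
  by_cases ha : #{i ∈ T | g i = true} ≤ a
  · rw [card_support_eq_eqOn_of_le T g ha, ← zchoose_natCast,
      Nat.cast_sub ha, Nat.cast_sub (card_le_univ T)]
  · rw [card_support_eq_eqOn_of_lt T g (by omega), zchoose_of_neg _ (by omega)]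

end Counting

section Column

variable {H : ℕ}

def agreeOnlyAt (b : Fin H → Bool) (c : Fin H) : Fin H → Bool :=
  fun i => if i = c then b i else !b i

lemma distOn_le_card (T : Finset (Fin H)) (f b : Fin H → Bool) : distOn T f b ≤ #T :=
  card_filter_le _ _

lemma distOn_eq_card_iff {T : Finset (Fin H)} {f b : Fin H → Bool} :
    distOn T f b = #T ↔ ∀ i ∈ T, f i = !b i := by
  simp only [distOn, card_filter_eq_iff, Bool.eq_not, ne_eq]

lemma card_agreeSet_add_distOn (T : Finset (Fin H)) (f b : Fin H → Bool) :
    #(agreeSet T f b) + distOn T f b = #T :=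
  card_filter_add_card_filter_not _

lemma agreeSet_eq_singleton_iff {T : Finset (Fin H)} {f b : Fin H → Bool} {c : Fin H} :
    agreeSet T f b = {c} ↔ c ∈ T ∧ ∀ i ∈ T, f i = agreeOnlyAt b c i := by
  constructor
  · intro h
    have hc : c ∈ agreeSet T f b := h ▸ mem_singleton_self c
    simp only [agreeSet, mem_filter] at hc
    refine ⟨hc.1, fun i hi => ?_⟩
    by_cases hic : i = c
    · simp [agreeOnlyAt, hic, hc.2]
    · have : i ∉ agreeSet T f b := by simpa [h] using hic
      simpa [agreeSet, agreeOnlyAt, hi, hic, Bool.eq_not] using this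
  · rintro ⟨hc, hf⟩
    ext i
    simp only [agreeSet, mem_filter, mem_singleton]
    constructor
    · rintro ⟨hi, hfi⟩
      by_contra hic
      simp [hf i hi, agreeOnlyAt, hic] at hfi
    · rintro rfl
      exact ⟨hc, by simpa [agreeOnlyAt] using hf i hc⟩

lemma distOn_add_one_eq_card_iff {T : Finset (Fin H)} {f b : Fin H → Bool} :
    distOn T f b + 1 = #T ↔ ∃ c ∈ T, ∀ i ∈ T, f i = agreeOnlyAt b c i := by
  have := card_agreeSet_add_distOn T f b
  rw [show distOn T f b + 1 = #T ↔ #(agreeSet T f b) = 1 by omega, card_eq_one]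
  simp only [agreeSet_eq_singleton_iff]

lemma card_wt_eq (a : ℕ) : #{f : Fin H → Bool | wt f = a} = H.choose a := by
  convert card_support_eq_eqOn (∅ : Finset (Fin H)) (fun _ => false) a using 3
  · simp [wt]
  · simp [zchoose_natCast]

lemma card_wt_eq_distOn_eq_card (T : Finset (Fin H)) (b : Fin H → Bool) (a : ℕ) :
    #{f : Fin H → Bool | wt f = a ∧ distOn T f b = #T}
      = zchoose (H - #T) (a - #{i ∈ T | b i = false}) := by
  convert card_support_eq_eqOn T (fun i => !b i) a using 3
  · rw [distOn_eq_card_iff, wt]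
  all_goals simp

lemma card_wt_eq_distOn_add_one_eq_card (T : Finset (Fin H)) (b : Fin H → Bool) (a : ℕ) :
    #{f : Fin H → Bool | wt f = a ∧ distOn T f b + 1 = #T}
      = ∑ c ∈ T, zchoose (H - #T) (a - #{i ∈ T | agreeOnlyAt b c i = true}) := by
  have hunion : ({f : Fin H → Bool | wt f = a ∧ distOn T f b + 1 = #T} : Finset _)
      = T.biUnion fun c =>
          {f : Fin H → Bool | wt f = a ∧ ∀ i ∈ T, f i = agreeOnlyAt b c i} := by
    ext f
    simp only [mem_filter, mem_univ, true_and, mem_biUnion, distOn_add_one_eq_card_iff]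
    constructor
    · rintro ⟨hwt, c, hc, hf⟩
      exact ⟨c, hc, hwt, hf⟩
    · rintro ⟨c, hc, hwt, hf⟩
      exact ⟨hwt, c, hc, hf⟩
  rw [hunion, card_biUnion]
  · refine sum_congr rfl fun c _ => ?_
    convert card_support_eq_eqOn T (agreeOnlyAt b c) a using 3
    · exact Iff.rfl
    · simp
  · intro c hc c' hc' hne
    refine disjoint_filter.2 fun f _ hf hf' => ?_
    have h1 := hf.2 c hc
    have h2 := hf'.2 c hc
    simp [agreeOnlyAt, hne] at h1 h2
    simp [h1] at h2

lemma card_filter_agreeOnlyAt {T : Finset (Fin H)} {b : Fin H → Bool} {c : Fin H} (hc : c ∈ T) :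
    #{i ∈ T | agreeOnlyAt b c i = true}
      = if b c then #{i ∈ T | b i = false} + 1 else #{i ∈ T | b i = false} - 1 := by
  by_cases hbc : b c = true
  · have hfilter : {i ∈ T | agreeOnlyAt b c i = true} = insert c {i ∈ T | b i = false} := by
      ext i
      by_cases hic : i = c <;> simp [agreeOnlyAt, hic, hbc, hc]
    rw [hfilter, card_insert_of_notMem (by simp [hbc]), if_pos hbc]
  · have hfilter : {i ∈ T | agreeOnlyAt b c i = true} = {i ∈ T | b i = false}.erase c := by
      ext i
      by_cases hic : i = c <;> simp_all [agreeOnlyAt]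
    rw [hfilter, card_erase_of_mem (by simp_all), if_neg hbc]

variable {T : Finset (Fin H)} {b : Fin H → Bool}

lemma card_wt_eq_distOn_eq_card_of_card_false_eq_one (hb : #{i ∈ T | b i = false} = 1)
    {a : ℕ} (ha : 1 ≤ a) :
    #{f : Fin H → Bool | wt f = a ∧ distOn T f b = #T} = (H - #T).choose (a - 1) := by
  rw [card_wt_eq_distOn_eq_card, hb, ← zchoose_natCast, Nat.cast_sub (card_finset_fin_le T),
    Nat.cast_sub ha, Nat.cast_one]

lemma card_wt_eq_distOn_add_one_eq_card_of_card_false_eq_one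
    (hb : #{i ∈ T | b i = false} = 1) (a : ℕ) :
    #{f : Fin H → Bool | wt f = a ∧ distOn T f b + 1 = #T}
      = (H - #T).choose a + #{i ∈ T | b i = true} * zchoose (H - #T) (a - 2) := by
  have hterm : ∀ c ∈ T, zchoose (H - #T) (a - #{i ∈ T | agreeOnlyAt b c i = true})
      = if b c = true then zchoose (H - #T) (a - 2) else zchoose (H - #T) a := by
    intro c hc
    rw [card_filter_agreeOnlyAt hc, hb]
    split_ifs <;> norm_num
  have hfalse : #{c ∈ T | ¬b c = true} = 1 := by simpa using hb
  rw [card_wt_eq_distOn_add_one_eq_card, sum_congr rfl hterm, sum_ite, sum_const, sum_const,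
    smul_eq_mul, smul_eq_mul, hfalse, one_mul, add_comm, ← Nat.cast_sub (card_finset_fin_le T),
    zchoose_natCast]

end Column

lemma choose_sub_pred_lt_choose {n r k : ℕ} (hr : 1 ≤ r) (hk : 1 ≤ k) (hkn : k < n) :
    (n - r).choose (k - 1) < n.choose k := by
  obtain ⟨n, rfl⟩ : ∃ m, n = m + 1 := ⟨n - 1, by omega⟩
  obtain ⟨k, rfl⟩ : ∃ m, k = m + 1 := ⟨k - 1, by omega⟩
  calc (n + 1 - r).choose (k + 1 - 1) ≤ n.choose k := Nat.choose_le_choose _ (by omega)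
    _ < n.choose k + n.choose (k + 1) := Nat.lt_add_of_pos_right (Nat.choose_pos (by omega))
    _ = (n + 1).choose (k + 1) := (Nat.choose_succ_succ n k).symm

/-- A row of the column `(T, b)` is a weight-`a` vector `f`; it is a star unless
`d(f|_T, b) = r - 1`, and a useless star when `d(f|_T, b) > r - 1`. -/
theorem stmt17_general (H r a : ℕ) (hr : 1 ≤ r) (ha : 1 ≤ a) (haH : a < H)
    (T : Finset (Fin H)) (hT : T.card = r) (b : Fin H → Bool)
    (hb : (T.filter (fun i => b i = true)).card = r - 1) :
    (Finset.univ.filter (fun f : Fin H → Bool => wt f = a)).card = Nat.choose H a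
    ∧ (Finset.univ.filter (fun f : Fin H → Bool =>
          wt f = a ∧ distOn T f b > r - 1)).card = Nat.choose (H - r) (a - 1)
    ∧ (Finset.univ.filter (fun f : Fin H → Bool =>
          wt f = a ∧ distOn T f b = r - 1)).card
        = Nat.choose (H - r) a + (r - 1) * zchoose ((H : ℤ) - r) ((a : ℤ) - 2)
    ∧ -- subpacketization `F = F1 - Z' = C(H,a) - C(H-r,a-1)` (with `λ = 1` multiplier)
      (Finset.univ.filter (fun f : Fin H → Bool => wt f = a)).card
          - (Finset.univ.filter (fun f : Fin H → Bool =>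
              wt f = a ∧ distOn T f b > r - 1)).card
        = Nat.choose H a - Nat.choose (H - r) (a - 1)
    ∧ (((Finset.univ.filter (fun f : Fin H → Bool =>
            wt f = a ∧ distOn T f b ≠ r - 1)).card : ℚ)
          - Nat.choose (H - r) (a - 1))
        / ((Nat.choose H a : ℚ) - Nat.choose (H - r) (a - 1))
      = 1 - ((Nat.choose (H - r) a : ℚ)
              + ((r : ℚ) - 1) * zchoose ((H : ℤ) - r) ((a : ℤ) - 2))
            / ((Nat.choose H a : ℚ) - Nat.choose (H - r) (a - 1)) := by
  subst hT
  have hfalse : #{i ∈ T | b i = false} = 1 := by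
    have := card_filter_add_card_filter_not (s := T) (fun i => b i = true)
    simp only [Bool.not_eq_true] at this
    omega
  have hrows := card_wt_eq (H := H) a
  have huseless : #{f : Fin H → Bool | wt f = a ∧ distOn T f b > #T - 1}
      = (H - #T).choose (a - 1) := by
    rw [← card_wt_eq_distOn_eq_card_of_card_false_eq_one hfalse ha]
    congr 1
    refine filter_congr fun f _ => and_congr_right fun _ => ?_
    have := distOn_le_card T f b
    omega
  have hnonstar : #{f : Fin H → Bool | wt f = a ∧ distOn T f b = #T - 1}
      = (H - #T).choose a + (#T - 1) * zchoose (H - #T) (a - 2) := by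
    rw [← hb, ← card_wt_eq_distOn_add_one_eq_card_of_card_false_eq_one hfalse]
    congr 1
    refine filter_congr fun f _ => and_congr_right fun _ => ?_
    omega
  have hsplit := card_filter_add_card_filter_not
    (s := {f : Fin H → Bool | wt f = a}) fun f => distOn T f b = #T - 1
  rw [filter_filter, filter_filter, hrows, hnonstar] at hsplit
  have hpos : ((H - #T).choose (a - 1) : ℚ) < H.choose a := by
    exact_mod_cast choose_sub_pred_lt_choose hr ha haH
  refine ⟨hrows, huseless, hnonstar, by rw [hrows, huseless], ?_⟩
  rw [eq_sub_iff_add_eq, ← add_div, div_eq_one_iff_eq (sub_ne_zero.2 hpos.ne')]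
  have := congrArg (Nat.cast : ℕ → ℚ) hsplit
  push_cast [Nat.cast_sub hr] at this
  linarith

/-- Construction 1 with `λ = ω = 1`. Fix a column `(T, b)` (`|T| = r`, `wt(b) = r-1`).
Then: the number of rows (`F1` = number of weight-`a` vectors) is `C(H,a)`; the useless
stars of the column number `Z' = C(H-r, a-1)` (rows `f` with `d(f|_T,b) > r-1`); the
non-star entries number `C(H-r,a) + (r-1)·C(H-r,a-2)`; the subpacketization is
`F = F1 - Z' = C(H,a) - C(H-r,a-1)`; and the memory ratio, `(Z-Z')/(F1-Z')` with `Z` the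
per-column star count, equals `1 - (C(H-r,a)+(r-1)·C(H-r,a-2))/(C(H,a)-C(H-r,a-1))`. -/
theorem stmt17 (H r a : ℕ) (hr : 1 ≤ r) (hrH : r < H) (ha : 1 ≤ a) (haH : a < H)
    (T : Finset (Fin H)) (hT : T.card = r) (b : Fin H → Bool)
    (hb : (T.filter (fun i => b i = true)).card = r - 1)
    (hb0 : ∀ i ∉ T, b i = false) :
    (Finset.univ.filter (fun f : Fin H → Bool => wt f = a)).card = Nat.choose H a
    ∧ (Finset.univ.filter (fun f : Fin H → Bool =>
          wt f = a ∧ distOn T f b > r - 1)).card = Nat.choose (H - r) (a - 1)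
    ∧ (Finset.univ.filter (fun f : Fin H → Bool =>
          wt f = a ∧ distOn T f b = r - 1)).card
        = Nat.choose (H - r) a + (r - 1) * zchoose ((H : ℤ) - r) ((a : ℤ) - 2)
    ∧ -- subpacketization `F = F1 - Z' = C(H,a) - C(H-r,a-1)` (with `λ = 1` multiplier)
      (Finset.univ.filter (fun f : Fin H → Bool => wt f = a)).card
          - (Finset.univ.filter (fun f : Fin H → Bool =>
              wt f = a ∧ distOn T f b > r - 1)).card
        = Nat.choose H a - Nat.choose (H - r) (a - 1)
    ∧ (((Finset.univ.filter (fun f : Fin H → Bool =>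
            wt f = a ∧ distOn T f b ≠ r - 1)).card : ℚ)
          - Nat.choose (H - r) (a - 1))
        / ((Nat.choose H a : ℚ) - Nat.choose (H - r) (a - 1))
      = 1 - ((Nat.choose (H - r) a : ℚ)
              + ((r : ℚ) - 1) * zchoose ((H : ℤ) - r) ((a : ℤ) - 2))
            / ((Nat.choose H a : ℚ) - Nat.choose (H - r) (a - 1)) :=
  stmt17_general H r a hr ha haH T hT b hb
end
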